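/- For every permutation τ of {1,…,n}, Ā(T(τ)) = 2 Ā(τ). -/

import Mathlib

open Equiv

namespace Rauzy

/-- `intervalCycle n a b` is the permutation of `Fin n` sending `j ↦ j+1` for
`a ≤ j < b`, sending `b ↦ a`, and fixing everything outside the interval `[a,b]`.
(It is the identity when `¬ (a ≤ b ∧ b < n)`.) -/
def intervalCycle (n a b : ℕ) : Equiv.Perm (Fin n) :=
  if hab : a ≤ b ∧ b < n then
    { toFun := fun j =>
        ⟨if a ≤ j.val ∧ j.val < b then j.val + 1 else if j.val = b then a else j.val,
          by have := j.isLt; split_ifs <;> omega⟩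
      invFun := fun j =>
        ⟨if a < j.val ∧ j.val ≤ b then j.val - 1 else if j.val = a then b else j.val,
          by have := j.isLt; split_ifs <;> omega⟩
      left_inv := by
        intro j
        have hj := j.isLt
        apply Fin.ext
        simp only [Fin.val_mk]
        split_ifs <;> omega
      right_inv := by
        intro j
        have hj := j.isLt
        apply Fin.ext
        simp only [Fin.val_mk]
        split_ifs <;> omega }
  else 1

/-- The Rauzy operator `L`: in 1-indexed terms, `L σ = γ ∘ σ` where `γ` fixes every
`j ≤ σ(1)`, maps `j ↦ j+1` for `σ(1) < j < n`, and maps `n ↦ σ(1)+1`.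
(Everything here is 0-indexed, so `σ(1)` is `σ 0`, and `γ` is the cycle
`intervalCycle n (σ(1)+1) (n-1)` in 0-indexed terms.) -/
def Lop {n : ℕ} (σ : Equiv.Perm (Fin n)) : Equiv.Perm (Fin n) :=
  if h : 0 < n then intervalCycle n ((σ ⟨0, h⟩).val + 1) (n - 1) * σ else σ

/-- The Rauzy operator `R`: in 1-indexed terms, `R σ = σ ∘ δ` where `δ` fixes every
`i ≥ σ⁻¹(n)`, maps `i ↦ i+1` for `1 ≤ i < σ⁻¹(n)−1`, and maps `σ⁻¹(n)−1 ↦ 1`. -/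
def Rop {n : ℕ} (σ : Equiv.Perm (Fin n)) : Equiv.Perm (Fin n) :=
  if h : 0 < n then σ * intervalCycle n 0 ((σ.symm ⟨n - 1, by omega⟩).val - 1) else σ

/-- The extended Rauzy operator `L' σ = (L (σ⁻¹))⁻¹`. -/
def Lext {n : ℕ} (σ : Equiv.Perm (Fin n)) : Equiv.Perm (Fin n) := (Lop σ⁻¹)⁻¹

/-- The extended Rauzy operator `R' σ = (R (σ⁻¹))⁻¹`. -/
def Rext {n : ℕ} (σ : Equiv.Perm (Fin n)) : Equiv.Perm (Fin n) := (Rop σ⁻¹)⁻¹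

/-- `σ` and `τ` are in the same Rauzy class, i.e. `τ = w σ` for a finite word `w` in
`L, R, L⁻¹, R⁻¹`: the equivalence relation generated by the operators `L` and `R`. -/
def REquiv {n : ℕ} : Equiv.Perm (Fin n) → Equiv.Perm (Fin n) → Prop :=
  Relation.EqvGen fun σ τ => τ = Lop σ ∨ τ = Rop σ

/-- `σ` and `τ` are in the same extended Rauzy class, i.e. related by a finite word in
`L, R, L', R'` and their inverses. -/
def ExtEquiv {n : ℕ} : Equiv.Perm (Fin n) → Equiv.Perm (Fin n) → Prop :=
  Relation.EqvGen fun σ τ => τ = Lop σ ∨ τ = Rop σ ∨ τ = Lext σ ∨ τ = Rext σ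

/-- `σ` is irreducible: in 1-indexed terms, for no `1 ≤ k < n` does
`σ({1,…,k}) = {n−k+1,…,n}` hold. -/
def Irreducible {n : ℕ} (σ : Equiv.Perm (Fin n)) : Prop :=
  ∀ k : ℕ, 0 < k → k < n →
    Finset.image σ (Finset.univ.filter fun i : Fin n => i.val < k) ≠
      Finset.univ.filter fun i : Fin n => n - k ≤ i.val

/-- The successor map of the cycle-invariant construction, acting on the set of top
arcs of the diagram of `σ` together with a marker for the rank path.

The element `x = 0` represents the two open endpoints of the rank path (top-left and
bottom-right), and an element `x ∈ {1,…,n−1}` represents the top arc joining the top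
points `x` and `x+1` (1-indexed).  Starting from a top arc (or from the top-left
endpoint), the path of the diagram goes down from the top black point `x+1`
(1-indexed) along an edge, either reaching the bottom-right endpoint (if
`σ⁻¹(x+1) = n`), or continuing through a bottom arc and a second edge upward —
possibly also crossing the `−1` mark — to the next top arc. -/
def nextArc {n : ℕ} (σ : Equiv.Perm (Fin n)) (x : Fin n) : Fin n :=
  have hn : 0 < n := Nat.lt_of_le_of_lt (Nat.zero_le _) x.isLt
  if hj : (σ.symm x).val = n - 1 then
    -- the rank path ends at the bottom-right endpoint; close the orbit back to `0`
    ⟨0, hn⟩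
  else
    have hlt : (σ.symm x).val + 1 < n := by have := (σ.symm x).isLt; omega
    have hv := (σ ⟨(σ.symm x).val + 1, hlt⟩).isLt
    if hm : (σ ⟨(σ.symm x).val + 1, hlt⟩).val = n - 1 then
      -- the upward edge reaches the top-right point: cross the `−1` mark, then
      -- follow the edge from the bottom-left point, reaching top arc `σ(1)` (1-indexed)
      ⟨(σ ⟨0, hn⟩).val + 1, by
        have h0 : σ ⟨0, hn⟩ ≠ σ ⟨(σ.symm x).val + 1, hlt⟩ := by
          intro hcontra
          have h1 := σ.injective hcontra
          simp only [Fin.mk.injEq] at h1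
          omega
        have h2 : (σ ⟨0, hn⟩).val ≠ n - 1 := by
          intro hcontra
          exact h0 (Fin.ext (by rw [hcontra, hm]))
        have h3 := (σ ⟨0, hn⟩).isLt
        omega⟩
    else
      -- reach the top arc whose left (white) endpoint is the top point `σ(j+1)` (1-indexed)
      ⟨(σ ⟨(σ.symm x).val + 1, hlt⟩).val + 1, by omega⟩

/-- The orbit of `x` under the successor map of the cycle-invariant construction. -/
def arcOrbit {n : ℕ} (σ : Equiv.Perm (Fin n)) (x : Fin n) : Finset (Fin n) :=
  (Finset.range n).image fun k => (nextArc σ)^[k] x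

/-- The rank `r(σ)`: the number of top arcs lying on the open (rank) path of the
cycle-invariant construction, i.e. the size of the orbit of the marker `0` minus one. -/
def rank {n : ℕ} (σ : Equiv.Perm (Fin n)) : ℕ :=
  if h : 0 < n then (arcOrbit σ ⟨0, h⟩).card - 1 else 0

/-- The cycle invariant `λ(σ)`: the multiset of the lengths (numbers of top arcs) of
the closed cycles of the cycle-invariant construction.  Each closed cycle is an orbit
of `nextArc σ` other than the orbit of the marker `0` (which is the rank path), counted
once via its minimal representative, and its length is the size of the orbit. -/
def cycleInv {n : ℕ} (σ : Equiv.Perm (Fin n)) : Multiset ℕ :=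
  if h : 0 < n then
    Multiset.map (fun x => (arcOrbit σ x).card)
      (Finset.univ.filter fun x : Fin n =>
        x ∉ arcOrbit σ ⟨0, h⟩ ∧ ∀ y ∈ arcOrbit σ x, x ≤ y).val
  else 0

/-- The extended cycle invariant `λ'(σ)`: the multiset `λ(σ)` together with one
additional part equal to the rank `r(σ)`. -/
def cycleInvExt {n : ℕ} (σ : Equiv.Perm (Fin n)) : Multiset ℕ := rank σ ::ₘ cycleInv σ

/-- `chi σ I` is `χ(I)`: the number of pairs `i < j` in `I` with `σ i < σ j`
(pairs of non-crossing edges of the diagram of `σ`). -/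
def chi {n : ℕ} (σ : Equiv.Perm (Fin n)) (I : Finset (Fin n)) : ℕ :=
  ((I ×ˢ I).filter fun p => p.1 < p.2 ∧ σ p.1 < σ p.2).card

/-- The Arf invariant `Ā(σ) = Σ_{I ⊆ {1,…,n}} (−1)^(|I| + χ(I))`. -/
def arfBar {n : ℕ} (σ : Equiv.Perm (Fin n)) : ℤ :=
  ∑ I ∈ (Finset.univ : Finset (Fin n)).powerset, (-1 : ℤ) ^ (I.card + chi σ I)

/-- The companion Arf sum `A(σ) = Σ_{I ⊆ {1,…,n}} (−1)^(χ(I))`. -/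
def arfA {n : ℕ} (σ : Equiv.Perm (Fin n)) : ℤ :=
  ∑ I ∈ (Finset.univ : Finset (Fin n)).powerset, (-1 : ℤ) ^ (chi σ I)

/-- The sign invariant `s(σ) = sign(Ā(σ)) ∈ {−1, 0, +1}`. -/
def sgn {n : ℕ} (σ : Equiv.Perm (Fin n)) : ℤ := (arfBar σ).sign

/-- The surgery operator `T`, mapping a permutation `τ` of `{1,…,n}` to the permutation
`T τ` of `{1,…,n+2}` defined (1-indexed) by `(T τ)(1) = τ(1)+2`, `(T τ)(2) = 1`, and,
for `1 ≤ i ≤ n`, `(T τ)(i+2) = τ(i)+1` if `τ(i) ≤ τ(1)` and `(T τ)(i+2) = τ(i)+2`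
otherwise.  It is built here as `α ∘ ρ ∘ β`, where `β` rearranges the positions
(0-indexed: `0 ↦ n+1`, `1 ↦ n`, `k+2 ↦ k`), `ρ` acts as `τ` on the first `n` points
and fixes the last two, and `α` adjusts the values (0-indexed: `v ↦ v+1` for
`v ≤ τ(0)`, `v ↦ v+2` for `τ(0) < v ≤ n−1`, `n ↦ 0`, `n+1 ↦ τ(0)+2`). -/
def Toper {n : ℕ} (τ : Equiv.Perm (Fin n)) : Equiv.Perm (Fin (n + 2)) :=
  if h : 0 < n then
    (intervalCycle (n + 2) ((τ ⟨0, h⟩).val + 2) (n + 1) * intervalCycle (n + 2) 0 n) *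
      (finSumFinEquiv.permCongr (Equiv.sumCongr τ (1 : Equiv.Perm (Fin 2)))) *
      (Equiv.swap (⟨n, by omega⟩ : Fin (n + 2)) ⟨n + 1, by omega⟩ *
        ((finRotate (n + 2))⁻¹) ^ 2)
  else 1

/-- `addOp σ l` is the permutation `add_ℓ(σ)` of `{1,…,n+1}` (with, 1-indexed,
`ℓ = l+1`), whose one-line notation is `(σ(1)+1, …, σ(ℓ−1)+1, 1, σ(ℓ)+1, …, σ(n)+1)`.
It is built as `α ∘ ρ ∘ β⁻¹` where `β` rearranges positions, `ρ` acts as `σ` on the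
first `n` points, and `α` shifts all values up by one cyclically. -/
def addOp {n : ℕ} (σ : Equiv.Perm (Fin n)) (l : Fin (n + 1)) : Equiv.Perm (Fin (n + 1)) :=
  intervalCycle (n + 1) 0 n *
    (finSumFinEquiv.permCongr (Equiv.sumCongr σ (1 : Equiv.Perm (Fin 1)))) *
    (intervalCycle (n + 1) l.val n)⁻¹

/-- The permutation `id'_n` of `{1,…,n}` (for `n ≥ 3`), with (1-indexed) values
`id'_n(1) = 1`, `id'_n(2) = n−1`, `id'_n(n) = n`, and `id'_n(i) = i−1` for
`3 ≤ i ≤ n−1`. -/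
def idP (n : ℕ) : Equiv.Perm (Fin n) :=
  if h : 3 ≤ n then
    { toFun := fun i =>
        ⟨if i.val = 0 then 0 else if i.val = 1 then n - 2
          else if i.val = n - 1 then n - 1 else i.val - 1,
          by have := i.isLt; split_ifs <;> omega⟩
      invFun := fun j =>
        ⟨if j.val = 0 then 0 else if j.val = n - 2 then 1
          else if j.val = n - 1 then n - 1 else j.val + 1,
          by have := j.isLt; split_ifs <;> omega⟩
      left_inv := by
        intro i
        have hi := i.isLt
        apply Fin.ext
        simp only [Fin.val_mk]
        split_ifs <;> (try contradiction) <;> omega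
      right_inv := by
        intro j
        have hj := j.isLt
        apply Fin.ext
        simp only [Fin.val_mk]
        split_ifs <;> (try contradiction) <;> omega }
  else 1

/-- The set of descents of `σ`: positions `i` (1-indexed, `i < n`) such that
`σ(i+1) = σ(i) − 1`. -/
def descentSet {n : ℕ} (σ : Equiv.Perm (Fin n)) : Finset (Fin n) :=
  Finset.univ.filter fun i =>
    ∃ j : Fin n, j.val = i.val + 1 ∧ (σ j).val + 1 = (σ i).val

/-- The set of special descents of `σ`: positions `i` (1-indexed, `i < n`) such that
`σ(i+1) = n` and `σ(1) = σ(i) − 1`. -/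
def specialDescentSet {n : ℕ} (σ : Equiv.Perm (Fin n)) : Finset (Fin n) :=
  Finset.univ.filter fun i =>
    ∃ j z : Fin n, z.val = 0 ∧ j.val = i.val + 1 ∧ (σ j).val = n - 1 ∧
      (σ z).val + 1 = (σ i).val

/-- The positions of the edges kept when forming the primitive of `σ`:
those which are neither descents nor special descents. -/
def keepSet {n : ℕ} (σ : Equiv.Perm (Fin n)) : Finset (Fin n) :=
  Finset.univ.filter fun i => i ∉ descentSet σ ∧ i ∉ specialDescentSet σ

/-- The size of the primitive of `σ`. -/
def primSize {n : ℕ} (σ : Equiv.Perm (Fin n)) : ℕ := (keepSet σ).card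

/-- The primitive `prim(σ)` of `σ`: the permutation induced by the edges `(i, σ(i))`
of `σ` which are neither descents nor special descents, after order-preserving
relabelling of the remaining positions and of the remaining values. -/
def primPerm {n : ℕ} (σ : Equiv.Perm (Fin n)) : Equiv.Perm (Fin (primSize σ)) :=
  ((keepSet σ).orderIsoOfFin rfl).toEquiv.trans
    ((Equiv.subtypeEquiv (p := fun x => x ∈ keepSet σ)
        (q := fun y => y ∈ Finset.image σ (keepSet σ)) σ
        (fun _ => (Function.Injective.mem_finset_image σ.injective).symm)).trans
      ((Finset.image σ (keepSet σ)).orderIsoOfFin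
        (by rw [Finset.card_image_of_injective _ σ.injective]; rfl)).toEquiv.symm)

/-!
Write the positions of `T τ` (0-indexed) as `0`, `1` and `i + 2`. The values at the positions
`i + 2` are in the same relative order as those of `τ`; position `1` carries the smallest value,
so it forms a non-crossing pair with every position `i + 2`, while position `0` forms one exactly
with the positions `i + 2` such that `τ i > τ 0`. Splitting the sum over `I` according to
`I ∩ {0, 1}` gives `Ā(T τ) = Σ_K (-1)^χ(K) ((-1)^|K| - 1) (1 - (-1)^c(K))` over `K ⊆ Fin n`,
where `c(K) = #{j ∈ K | τ 0 < τ j}`. Pairing `K ∌ 0` with `K ∪ {0}`, for which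
`χ(K ∪ {0}) = χ(K) + c(K)`, turns this into twice the sum defining `Ā(τ)`.
-/

open Finset

lemma intervalCycle_apply_val {n a b : ℕ} (hab : a ≤ b ∧ b < n) (j : Fin n) :
    (intervalCycle n a b j).val =
      if a ≤ j.val ∧ j.val < b then j.val + 1 else if j.val = b then a else j.val := by
  rw [intervalCycle, dif_pos hab]
  rfl

lemma finRotate_inv_sq_apply {n : ℕ} {x y : Fin n} (h : finRotate n (finRotate n y) = x) :
    ((finRotate n)⁻¹ ^ 2) x = y := by
  rw [inv_pow, Perm.inv_eq_iff_eq, sq, Perm.mul_apply, h]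

lemma permCongr_sumCongr_one_apply_castAdd {n k : ℕ} (τ : Perm (Fin n)) (i : Fin n) :
    finSumFinEquiv.permCongr (sumCongr τ (1 : Perm (Fin k))) (Fin.castAdd k i) =
      Fin.castAdd k (τ i) := by
  simp

lemma permCongr_sumCongr_one_apply_natAdd {n k : ℕ} (τ : Perm (Fin n)) (j : Fin k) :
    finSumFinEquiv.permCongr (sumCongr τ (1 : Perm (Fin k))) (Fin.natAdd n j) =
      Fin.natAdd n j := by
  simp

lemma sum_powerset_univ_succ {M : Type*} [AddCommMonoid M] {k : ℕ}
    (f : Finset (Fin (k + 1)) → M) :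
    ∑ I ∈ (univ : Finset (Fin (k + 1))).powerset, f I =
      ∑ J ∈ (univ : Finset (Fin k)).powerset,
        (f (J.map (Fin.succEmb k)) + f (insert 0 (J.map (Fin.succEmb k)))) := by
  have hps : (univ.map (Fin.succEmb k)).powerset =
      univ.powerset.map (mapEmbedding (Fin.succEmb k)).toEmbedding := by
    ext t
    simp [subset_map_iff, eq_comm]
  have hsucc : (⟨Fin.succ, Fin.succ_injective _⟩ : Fin k ↪ Fin (k + 1)) = Fin.succEmb k := rfl
  rw [Fin.univ_succ, cons_eq_insert, hsucc, sum_powerset_insert (by simp), hps, sum_map,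
    sum_map, ← sum_add_distrib]
  rfl

section Chi

variable {n : ℕ}

lemma chi_insert_of_forall_lt (σ : Perm (Fin n)) {a : Fin n} {s : Finset (Fin n)}
    (h : ∀ j ∈ s, a < j) : chi σ (insert a s) = chi σ s + #{j ∈ s | σ a < σ j} := by
  have ha : a ∉ s := fun has => lt_irrefl a (h a has)
  simp only [chi, card_filter, sum_product, sum_insert ha, lt_irrefl, false_and, if_false,
    zero_add, sum_add_distrib]
  have hbefore : ∑ i ∈ s, (if i < a ∧ σ i < σ a then 1 else 0) = 0 :=
    sum_eq_zero fun i hi => if_neg fun hia => (h i hi).not_gt hia.1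
  have hafter : ∑ j ∈ s, (if a < j ∧ σ a < σ j then 1 else 0) =
      ∑ j ∈ s, if σ a < σ j then 1 else 0 :=
    sum_congr rfl fun j hj => by simp only [h j hj, true_and]
  rw [hbefore, hafter]
  ring

lemma chi_map {k : ℕ} (σ : Perm (Fin k)) (τ : Perm (Fin n)) (e : Fin n ↪ Fin k)
    (he : StrictMono e) (hσ : ∀ i j, σ (e i) < σ (e j) ↔ τ i < τ j) (s : Finset (Fin n)) :
    chi σ (s.map e) = chi τ s := by
  simp only [chi, card_filter, sum_product, sum_map, he.lt_iff_lt, hσ]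

end Chi

section Toper

variable {m : ℕ} (τ : Perm (Fin (m + 1)))

lemma Toper_eq : Toper τ =
    (intervalCycle (m + 1 + 2) ((τ 0).val + 2) (m + 1 + 1) *
        intervalCycle (m + 1 + 2) 0 (m + 1)) *
      finSumFinEquiv.permCongr (sumCongr τ (1 : Perm (Fin 2))) *
      (swap (Fin.natAdd (m + 1) 0) (Fin.natAdd (m + 1) 1) * (finRotate (m + 1 + 2))⁻¹ ^ 2) := by
  rw [Toper, dif_pos m.succ_pos]
  rfl

lemma Toper_apply_zero : (Toper τ 0).val = (τ 0).val + 2 := by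
  have hrot : ((finRotate (m + 1 + 2))⁻¹ ^ 2) 0 = Fin.natAdd (m + 1) 0 :=
    finRotate_inv_sq_apply (by ext; simp [finRotate_apply, Fin.val_add])
  have h0 := (τ 0).isLt
  rw [Toper_eq]
  simp only [Perm.mul_apply, hrot, swap_apply_left, permCongr_sumCongr_one_apply_natAdd]
  rw [intervalCycle_apply_val (by omega), intervalCycle_apply_val (by omega)]
  simp

lemma Toper_apply_one : Toper τ 1 = 0 := by
  have hrot : ((finRotate (m + 1 + 2))⁻¹ ^ 2) 1 = Fin.natAdd (m + 1) 1 :=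
    finRotate_inv_sq_apply (by ext; simp [finRotate_apply, Fin.val_add])
  rw [Toper_eq]
  simp only [Perm.mul_apply, hrot, swap_apply_right, permCongr_sumCongr_one_apply_natAdd]
  ext
  rw [intervalCycle_apply_val (by omega), intervalCycle_apply_val (by omega)]
  simp

lemma Toper_apply_succ_succ (i : Fin (m + 1)) :
    (Toper τ i.succ.succ).val = if τ i ≤ τ 0 then (τ i).val + 1 else (τ i).val + 2 := by
  have hrot : ((finRotate (m + 1 + 2))⁻¹ ^ 2) i.succ.succ = Fin.castAdd 2 i :=
    finRotate_inv_sq_apply (by ext; simp [finRotate_apply, Fin.val_add]; omega)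
  have hi := i.isLt
  have hτi := (τ i).isLt
  rw [Toper_eq]
  simp only [Perm.mul_apply, hrot]
  rw [swap_apply_of_ne_of_ne (by simp [Fin.ext_iff]; omega) (by simp [Fin.ext_iff]; omega),
    permCongr_sumCongr_one_apply_castAdd, intervalCycle_apply_val (by omega),
    intervalCycle_apply_val (by omega)]
  simp only [Fin.val_castAdd, Fin.le_iff_val_le_val]
  split_ifs <;> omega

lemma Toper_apply_zero_lt_iff (i : Fin (m + 1)) :
    Toper τ 0 < Toper τ i.succ.succ ↔ τ 0 < τ i := by
  rw [Fin.lt_def, Fin.lt_def, Toper_apply_zero, Toper_apply_succ_succ]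
  split_ifs with h <;> simp only [Fin.le_def] at h <;> omega

lemma Toper_apply_succ_succ_lt_iff (i j : Fin (m + 1)) :
    Toper τ i.succ.succ < Toper τ j.succ.succ ↔ τ i < τ j := by
  rw [Fin.lt_def, Fin.lt_def, Toper_apply_succ_succ, Toper_apply_succ_succ]
  split_ifs with hi hj hj <;> simp only [Fin.le_def] at hi hj <;> omega

variable (K : Finset (Fin (m + 1)))

lemma chi_Toper_map : chi (Toper τ) ((K.map (Fin.succEmb _)).map (Fin.succEmb _)) = chi τ K := by
  rw [map_map]
  exact chi_map _ _ _ (Fin.strictMono_succ.comp Fin.strictMono_succ)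
    (Toper_apply_succ_succ_lt_iff τ) K

lemma one_lt_of_mem_map_succEmb_succEmb {x : Fin (m + 1 + 2)}
    (hx : x ∈ (K.map (Fin.succEmb _)).map (Fin.succEmb _)) : 1 < x := by
  simp only [mem_map, Fin.coe_succEmb] at hx
  obtain ⟨_, ⟨a, -, rfl⟩, rfl⟩ := hx
  simp [Fin.lt_def]

lemma card_filter_Toper_zero_lt :
    #{x ∈ (K.map (Fin.succEmb _)).map (Fin.succEmb _) | Toper τ 0 < Toper τ x} =
      #{j ∈ K | τ 0 < τ j} := by
  rw [filter_map, card_map, filter_map, card_map]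
  simp only [Function.comp_def, Fin.coe_succEmb, Toper_apply_zero_lt_iff]

lemma chi_Toper_insert_zero :
    chi (Toper τ) (insert 0 ((K.map (Fin.succEmb _)).map (Fin.succEmb _))) =
      chi τ K + #{j ∈ K | τ 0 < τ j} := by
  rw [chi_insert_of_forall_lt _ (by simp [Fin.succ_pos]), chi_Toper_map, card_filter_Toper_zero_lt]

lemma chi_Toper_insert_one :
    chi (Toper τ) (insert 1 ((K.map (Fin.succEmb _)).map (Fin.succEmb _))) = chi τ K + #K := by
  rw [chi_insert_of_forall_lt _ fun x => one_lt_of_mem_map_succEmb_succEmb K, chi_Toper_map,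
    filter_true_of_mem, card_map, card_map]
  intro x hx
  rw [Toper_apply_one, Fin.pos_iff_ne_zero, ← Toper_apply_one τ]
  exact (Toper τ).injective.ne (one_lt_of_mem_map_succEmb_succEmb K hx).ne'

lemma chi_Toper_insert_zero_one :
    chi (Toper τ) (insert 0 (insert 1 ((K.map (Fin.succEmb _)).map (Fin.succEmb _)))) =
      chi τ K + #K + #{j ∈ K | τ 0 < τ j} := by
  rw [chi_insert_of_forall_lt _ (by simp [Fin.succ_pos]), chi_Toper_insert_one, filter_insert,
    Toper_apply_one, if_neg (Fin.not_lt_zero _), card_filter_Toper_zero_lt]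

end Toper

lemma arfBar_Toper {m : ℕ} (τ : Perm (Fin (m + 1))) :
    arfBar (Toper τ) = ∑ K ∈ (univ : Finset (Fin (m + 1))).powerset,
      (-1) ^ chi τ K * ((-1) ^ #K - 1) * (1 - (-1) ^ #{j ∈ K | τ 0 < τ j}) := by
  rw [arfBar, sum_powerset_univ_succ, sum_powerset_univ_succ]
  simp only [map_insert, Fin.coe_succEmb, Fin.succ_zero_eq_one]
  refine sum_congr rfl fun K _ => ?_
  rw [chi_Toper_map, chi_Toper_insert_zero, chi_Toper_insert_one, chi_Toper_insert_zero_one]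
  set S := (K.map (Fin.succEmb _)).map (Fin.succEmb (m + 1 + 1))
  have h0 : 0 ∉ S := fun h => (Fin.not_lt_zero 1) (one_lt_of_mem_map_succEmb_succEmb K h)
  have h1 : 1 ∉ S := fun h => (one_lt_of_mem_map_succEmb_succEmb K h).ne rfl
  have h01 : 0 ∉ insert 1 S := by simp [h0]
  have hu : (-1 : ℤ) ^ #K * (-1) ^ #K = 1 := pow_mul_pow_eq_one _ (by norm_num)
  simp only [card_insert_of_notMem h0, card_insert_of_notMem h1, card_insert_of_notMem h01, S,
    card_map, pow_add, pow_one]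
  linear_combination -(-1 : ℤ) ^ chi τ K * (1 - (-1) ^ #{j ∈ K | τ 0 < τ j}) * hu

/-- The Arf invariant doubles under the operator `T`: `Ā(T τ) = 2 Ā(τ)`. -/
theorem arf_of_T (n : ℕ) (hn : 1 ≤ n) (τ : Equiv.Perm (Fin n)) :
    arfBar (Toper τ) = 2 * arfBar τ := by
  obtain ⟨m, rfl⟩ : ∃ m, n = m + 1 := ⟨n - 1, by omega⟩
  rw [arfBar_Toper, arfBar, sum_powerset_univ_succ, sum_powerset_univ_succ, mul_sum]
  refine sum_congr rfl fun J _ => ?_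
  set K := J.map (Fin.succEmb m)
  have hK : ∀ j ∈ K, 0 < j := by simp [K, Fin.succ_pos]
  have h0 : (0 : Fin (m + 1)) ∉ K := fun h => (hK 0 h).ne rfl
  rw [chi_insert_of_forall_lt τ hK, card_insert_of_notMem h0, filter_insert, if_neg (lt_irrefl _)]
  have hv : (-1 : ℤ) ^ #{j ∈ K | τ 0 < τ j} * (-1) ^ #{j ∈ K | τ 0 < τ j} = 1 :=
    pow_mul_pow_eq_one _ (by norm_num)
  simp only [pow_add, pow_one]
  linear_combination (-1 : ℤ) ^ chi τ K * (1 + (-1) ^ #K) * hv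

end Rauzy
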